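/- Let T be a tree with positive edge weights and no degree-2 vertices, let u, v be distinct leaves of T, and let w be an internal vertex of the unique u-v-path p in T. Then z(u,v) ≤ ℓ(w), where z(u,v) := d(u,v) + Σ_{x ∈ L(T)} d(x,p), and equality holds if and only if p = (u, w, v), i.e., u and v form a cherry with mid-point w. -/

import Mathlib

/-
Removing `u` and `v` from the leaf sums: they contribute `d(u,m) + d(m,v) = d(u,v)` to `ℓ(m)`
and nothing to the path status, while every other leaf `x` has `d(x,p) ≤ d(x,m)`. If `p` had an
internal vertex `a ≠ m`, then `a` (of degree at least 3) has a neighbour `b` off `p`; a leaf `x`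
beyond `b` reaches `p` at `a`, so `d(x,p) ≤ d(x,a) < d(x,m)` and the inequality is strict.
Conversely, in a cherry every path from another leaf to `u` or `v` runs through `m`.
-/

open SimpleGraph Finset

noncomputable section

variable {V : Type*}

/-- The weight of a walk: sum of the weights of its edges. -/
def walkWeight {G : SimpleGraph V} (w : Sym2 V → ℝ) {x y : V} (p : G.Walk x y) : ℝ :=
  (p.edges.map w).sum

/-- The unique path between two vertices of a tree. -/
noncomputable def tpath {G : SimpleGraph V} (hT : G.IsTree) (x y : V) : G.Walk x y :=
  (hT.existsUnique_path x y).choose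

/-- The weighted distance between two vertices of a tree: the weight of the unique path. -/
noncomputable def tdist {G : SimpleGraph V} (hT : G.IsTree) (w : Sym2 V → ℝ) (x y : V) : ℝ :=
  walkWeight w (tpath hT x y)

/-- The distance from a vertex `x` to a path `p`: the minimum distance from `x`
to a vertex on `p`. -/
noncomputable def distToPath {G : SimpleGraph V} (hT : G.IsTree) (w : Sym2 V → ℝ)
    (x : V) {a b : V} (p : G.Walk a b) : ℝ :=
  sInf {r | ∃ y ∈ p.support, r = tdist hT w x y}

/-- The set of leaves of a graph. -/
def leaves (G : SimpleGraph V) [Fintype V] [DecidableRel G.Adj] : Finset V :=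
  Finset.univ.filter (fun v => G.degree v = 1)

/-- The leaf-status of a vertex: the sum of its distances to all leaves. -/
noncomputable def leafStatus {G : SimpleGraph V} [Fintype V] [DecidableRel G.Adj]
    (hT : G.IsTree) (w : Sym2 V → ℝ) (u : V) : ℝ :=
  ∑ x ∈ leaves G, tdist hT w u x

/-- The leaf-status of a path: the sum of the distances of all leaves to the path. -/
noncomputable def pathLeafStatus {G : SimpleGraph V} [Fintype V] [DecidableRel G.Adj]
    (hT : G.IsTree) (w : Sym2 V → ℝ) {a b : V} (p : G.Walk a b) : ℝ :=
  ∑ x ∈ leaves G, distToPath hT w x p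

/-- `Lside hT w u v` is the set `L^{uv}_u` of leaves strictly closer to `u` than to `v`. -/
noncomputable def Lside {G : SimpleGraph V} [Fintype V] [DecidableRel G.Adj]
    (hT : G.IsTree) (w : Sym2 V → ℝ) (u v : V) : Finset V :=
  (leaves G).filter (fun x => tdist hT w x u < tdist hT w x v)

variable {G : SimpleGraph V} {u v x y : V}

lemma exists_adj_ne_ne_of_three_le_degree [Fintype (G.neighborSet x)] (h : 3 ≤ G.degree x)
    (y z : V) : ∃ c, G.Adj x c ∧ c ≠ y ∧ c ≠ z := by
  classical
  by_contra! hc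
  have hsub : G.neighborFinset x ⊆ {y, z} := fun c hc' => by
    rw [mem_neighborFinset] at hc'
    by_cases hcy : c = y
    · simp [hcy]
    · simp [hc c hc' hcy]
  have := card_le_card hsub
  rw [card_neighborFinset_eq_degree] at this
  have := card_le_two (a := y) (b := z)
  omega

lemma mem_support_of_degree_eq_one {m : V} [Fintype (G.neighborSet u)] (hu : G.degree u = 1)
    (hum : G.Adj u m) {q : G.Walk u x} (hxu : x ≠ u) : m ∈ q.support := by
  obtain ⟨c, -, huniq⟩ := degree_eq_one_iff_existsUnique_adj.1 hu
  rw [huniq m hum, ← huniq _ (q.adj_snd (Walk.not_nil_of_ne hxu.symm))]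
  exact q.getVert_mem_support 1

lemma SimpleGraph.Walk.IsPath.append_of_disjoint {z : V} {p : G.Walk x y} {q : G.Walk y z}
    (hp : p.IsPath) (hq : q.IsPath) (h : ∀ c ∈ p.support, c ∉ q.support.tail) :
    (p.append q).IsPath := by
  rw [Walk.isPath_def, Walk.support_append, List.nodup_append']
  exact ⟨hp.support_nodup, hq.support_nodup.sublist (List.tail_sublist _),
    fun c hcp hcq => h c hcp hcq⟩

lemma adj_of_forall_mem_support_eq {m : V} {p : G.Walk u v} (hp : p.IsPath)
    (hm : m ∈ p.support) (hmu : m ≠ u) (hmv : m ≠ v)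
    (h : ∀ a ∈ p.support, a ≠ u → a ≠ v → a = m) : G.Adj u m := by
  cases p with
  | nil => exact absurd (by simpa using hm) hmu
  | @cons _ c _ hadj q =>
    by_cases hcv : c = v
    · subst hcv
      rw [Walk.eq_nil_iff_nil.2 (Walk.isPath_iff_nil.1 ((Walk.cons_isPath_iff _ _).1 hp).1)] at hm
      simp_all
    · rwa [← h c (by simp) hadj.ne' hcv]

lemma adj_and_adj_of_forall_mem_support_eq {m : V} {p : G.Walk u v} (hp : p.IsPath)
    (hm : m ∈ p.support) (hmu : m ≠ u) (hmv : m ≠ v)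
    (h : ∀ a ∈ p.support, a ≠ u → a ≠ v → a = m) : G.Adj u m ∧ G.Adj m v :=
  ⟨adj_of_forall_mem_support_eq hp hm hmu hmv h,
    (adj_of_forall_mem_support_eq hp.reverse (by simpa using hm) hmv hmu fun a ha hav hau =>
      h a (by simpa using ha) hau hav).symm⟩

lemma exists_adj_notMem_support [Fintype V] [DecidableRel G.Adj] (hG : G.IsAcyclic)
    (hdeg : ∀ x : V, G.degree x ≠ 2) {p : G.Walk u v} (hp : p.IsPath) {a : V}
    (ha : a ∈ p.support) (hau : a ≠ u) (hav : a ≠ v) : ∃ b, G.Adj a b ∧ b ∉ p.support := by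
  classical
  set t := p.takeUntil a ha
  set d := p.dropUntil a ha
  have htnil : ¬t.Nil := Walk.not_nil_of_ne hau.symm
  have hdnil : ¬d.Nil := Walk.not_nil_of_ne hav
  have hsupp : p.support = t.support ++ d.support.tail := by
    rw [← Walk.support_append, Walk.take_spec]
  have hne : t.penultimate ≠ d.snd := fun h =>
    List.disjoint_of_nodup_append (hsupp ▸ hp.support_nodup) (t.getVert_mem_support _)
      (h ▸ Walk.snd_mem_tail_support hdnil)
  have h3 : 3 ≤ G.degree a := by
    have hsub : ({t.penultimate, d.snd} : Finset V) ⊆ G.neighborFinset a := by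
      intro c hc
      rcases mem_insert.1 hc with rfl | hc
      · simpa using (t.adj_penultimate htnil).symm
      · simpa [mem_singleton.1 hc] using d.adj_snd hdnil
    have := card_le_card hsub
    rw [card_pair hne, card_neighborFinset_eq_degree] at this
    have := hdeg a
    omega
  obtain ⟨b, hab, hbt, hbd⟩ := exists_adj_ne_ne_of_three_le_degree h3 t.penultimate d.snd
  refine ⟨b, hab, fun hb => ?_⟩
  rcases List.mem_append.1 (hsupp ▸ hb) with hb | hb
  · exact hbt (hG.eq_penultimate_of_adj_end (hp.takeUntil ha) hab hb)
  · exact hbd (hG.eq_snd_of_adj_start (hp.dropUntil ha) hab (List.mem_of_mem_tail hb))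

section WalkWeight

lemma walkWeight_append (w : Sym2 V → ℝ) {z : V} (p : G.Walk x y) (q : G.Walk y z) :
    walkWeight w (p.append q) = walkWeight w p + walkWeight w q := by
  simp only [walkWeight, Walk.edges_append, List.map_append, List.sum_append]

lemma walkWeight_reverse (w : Sym2 V → ℝ) (p : G.Walk x y) :
    walkWeight w p.reverse = walkWeight w p := by
  simp only [walkWeight, Walk.edges_reverse, List.map_reverse, List.sum_reverse]

variable {w : Sym2 V → ℝ}

lemma walkWeight_nonneg (hw : ∀ e ∈ G.edgeSet, 0 ≤ w e) (p : G.Walk x y) :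
    0 ≤ walkWeight w p :=
  List.sum_nonneg fun _ hr => by
    obtain ⟨e, he, rfl⟩ := List.mem_map.1 hr
    exact hw e (p.edges_subset_edgeSet he)

lemma walkWeight_pos (hw : ∀ e ∈ G.edgeSet, 0 < w e) {p : G.Walk x y} (hp : ¬p.Nil) :
    0 < walkWeight w p := by
  refine List.sum_pos _ (fun _ hr => ?_) (by simpa using Walk.edges_eq_nil.not.mpr hp)
  obtain ⟨e, he, rfl⟩ := List.mem_map.1 hr
  exact hw e (p.edges_subset_edgeSet he)

end WalkWeight

section Tree

variable (hT : G.IsTree)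

lemma tpath_isPath (x y : V) : (tpath hT x y).IsPath :=
  (hT.existsUnique_path x y).choose_spec.1

lemma tpath_eq_of_isPath {q : G.Walk x y} (hq : q.IsPath) : tpath hT x y = q :=
  ((hT.existsUnique_path x y).choose_spec.2 q hq).symm

lemma tpath_self (x : V) : tpath hT x x = .nil :=
  tpath_eq_of_isPath hT .nil

lemma support_tpath_subset {p : G.Walk u v} (hp : p.IsPath) {c d : V} (hc : c ∈ p.support)
    (hd : d ∈ p.support) : (tpath hT c d).support ⊆ p.support := by
  classical
  have hd' : d ∈ ((p.takeUntil c hc).append (p.dropUntil c hc)).support := by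
    rwa [Walk.take_spec]
  rcases (Walk.mem_support_append_iff _ _).1 hd' with hdt | hdd
  · have hdt' : d ∈ (p.takeUntil c hc).reverse.support := by simpa using hdt
    rw [tpath_eq_of_isPath hT ((hp.takeUntil hc).reverse.takeUntil hdt')]
    intro y hy
    have := Walk.support_takeUntil_subset_support _ hdt' hy
    exact Walk.support_takeUntil_subset_support p hc (by simpa using this)
  · rw [tpath_eq_of_isPath hT ((hp.dropUntil hc).takeUntil hdd)]
    exact List.Subset.trans (Walk.support_takeUntil_subset_support _ hdd)
      (Walk.support_dropUntil_subset_support p hc)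

lemma mem_support_tpath_of_adj {a b : V} (hab : G.Adj a b) (hx : a ∉ (tpath hT b x).support)
    (hy : b ∉ (tpath hT y a).support) : a ∈ (tpath hT y x).support := by
  have hdisj : ∀ c ∈ (tpath hT y a).support, c ∉ (tpath hT b x).support := fun c hcy hcx =>
    hx <| support_tpath_subset hT (tpath_isPath hT b x) hcx (Walk.start_mem_support _)
      (hT.isAcyclic.mem_support_of_ne_mem_support_of_adj_of_isPath (tpath_isPath hT c b)
        (tpath_isPath hT c a) hab.symm fun hb =>
          hy (support_tpath_subset hT (tpath_isPath hT y a) hcy (Walk.end_mem_support _) hb))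
  have hpath := (tpath_isPath hT y a).append_of_disjoint
    ((tpath_isPath hT b x).cons hx (h := hab)) (by simpa using hdisj)
  rw [tpath_eq_of_isPath hT hpath]
  simp

variable (w : Sym2 V → ℝ)

lemma tdist_eq_walkWeight {q : G.Walk x y} (hq : q.IsPath) :
    tdist hT w x y = walkWeight w q := by
  rw [tdist, tpath_eq_of_isPath hT hq]

lemma tdist_self (x : V) : tdist hT w x x = 0 := by
  simp [tdist, tpath_self, walkWeight]

lemma tdist_comm (x y : V) : tdist hT w x y = tdist hT w y x := by
  rw [tdist_eq_walkWeight hT w (tpath_isPath hT y x).reverse, walkWeight_reverse, tdist]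

lemma tdist_add_tdist {z : V} {q : G.Walk x z} (hq : q.IsPath) (hy : y ∈ q.support) :
    tdist hT w x y + tdist hT w y z = tdist hT w x z := by
  classical
  rw [tdist_eq_walkWeight hT w (hq.takeUntil hy), tdist_eq_walkWeight hT w (hq.dropUntil hy),
    tdist_eq_walkWeight hT w hq, ← walkWeight_append, Walk.take_spec]

lemma finite_setOf_tdist_mem_support (x : V) (p : G.Walk u v) :
    {r | ∃ y ∈ p.support, r = tdist hT w x y}.Finite :=
  (p.support.finite_toSet.image (tdist hT w x)).subset fun _ ⟨y, hy, hr⟩ => ⟨y, hy, hr.symm⟩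

lemma exists_mem_support_distToPath_eq (x : V) (p : G.Walk u v) :
    ∃ y ∈ p.support, distToPath hT w x p = tdist hT w x y :=
  Set.Nonempty.csInf_mem (s := {r | ∃ y ∈ p.support, r = tdist hT w x y})
    ⟨_, u, p.start_mem_support, rfl⟩ (finite_setOf_tdist_mem_support hT w x p)

lemma distToPath_le (x : V) (p : G.Walk u v) (hy : y ∈ p.support) :
    distToPath hT w x p ≤ tdist hT w x y :=
  csInf_le (finite_setOf_tdist_mem_support hT w x p).bddBelow ⟨y, hy, rfl⟩

variable {w}

lemma tdist_nonneg (hw : ∀ e ∈ G.edgeSet, 0 ≤ w e) (x y : V) : 0 ≤ tdist hT w x y :=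
  walkWeight_nonneg hw _

lemma tdist_pos (hw : ∀ e ∈ G.edgeSet, 0 < w e) (hxy : x ≠ y) : 0 < tdist hT w x y :=
  walkWeight_pos hw (Walk.not_nil_of_ne hxy)

lemma distToPath_eq_zero (hw : ∀ e ∈ G.edgeSet, 0 ≤ w e) (p : G.Walk u v)
    (hx : x ∈ p.support) : distToPath hT w x p = 0 := by
  obtain ⟨y, -, hy⟩ := exists_mem_support_distToPath_eq hT w x p
  refine le_antisymm ?_ (hy ▸ tdist_nonneg hT hw x y)
  simpa [tdist_self] using distToPath_le hT w x p hx

lemma tdist_le_of_degree_eq_one [Fintype (G.neighborSet u)] (hw : ∀ e ∈ G.edgeSet, 0 ≤ w e)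
    {m : V} (hu : G.degree u = 1) (hum : G.Adj u m) (hxu : x ≠ u) :
    tdist hT w m x ≤ tdist hT w u x := by
  rw [← tdist_add_tdist hT w (tpath_isPath hT u x) (mem_support_of_degree_eq_one hu hum hxu)]
  exact le_add_of_nonneg_left (tdist_nonneg hT hw u m)

lemma distToPath_eq_tdist_of_adj_of_adj [Fintype (G.neighborSet u)] [Fintype (G.neighborSet v)]
    (hw : ∀ e ∈ G.edgeSet, 0 ≤ w e) {m : V} (hu : G.degree u = 1) (hv : G.degree v = 1)
    (huv : u ≠ v) (hum : G.Adj u m) (hmv : G.Adj m v) {p : G.Walk u v} (hp : p.IsPath)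
    (hxu : x ≠ u) (hxv : x ≠ v) : distToPath hT w x p = tdist hT w m x := by
  have hcherry : (Walk.cons hum (Walk.cons hmv Walk.nil)).IsPath := by
    simp [hum.ne, hmv.ne, huv]
  obtain rfl := (tpath_eq_of_isPath hT hp).symm.trans (tpath_eq_of_isPath hT hcherry)
  refine le_antisymm ((distToPath_le hT w x _ (by simp)).trans_eq (tdist_comm hT w x m)) ?_
  obtain ⟨y, hy, hxy⟩ := exists_mem_support_distToPath_eq hT w x
    (Walk.cons hum (Walk.cons hmv Walk.nil))
  rw [hxy, tdist_comm hT w x y]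
  simp only [Walk.support_cons, Walk.support_nil, List.mem_cons, List.not_mem_nil,
    or_false] at hy
  rcases hy with rfl | rfl | rfl
  · exact tdist_le_of_degree_eq_one hT hw hu hum hxu
  · exact le_rfl
  · exact tdist_le_of_degree_eq_one hT hw hv hmv.symm hxv

variable [Fintype V] [DecidableRel G.Adj]

lemma exists_leaf_notMem_support_tpath (hdeg : ∀ x : V, G.degree x ≠ 2) {a b : V}
    (hab : G.Adj a b) : ∃ x ∈ leaves G, a ∉ (tpath hT b x).support := by
  classical
  have : Nontrivial V := ⟨⟨a, b, hab.ne⟩⟩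
  let S := univ.filter fun y => a ∉ (tpath hT b y).support
  have hbS : b ∈ S := by simp [S, tpath_self, hab.ne]
  obtain ⟨x, hxS, hmax⟩ := S.exists_max_image (fun y => (tpath hT b y).length) ⟨b, hbS⟩
  have hax : a ∉ (tpath hT b x).support := (mem_filter.1 hxS).2
  refine ⟨x, mem_filter.2 ⟨mem_univ x, ?_⟩, hax⟩
  by_contra hx
  -- a non-leaf `x` has a neighbour `c` that extends the path from `b`, contradicting maximality
  have h3 : 3 ≤ G.degree x := by
    have := hT.connected.preconnected.degree_pos_of_nontrivial x
    have := hdeg x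
    omega
  obtain ⟨c, hxc, hca, hcpen⟩ :=
    exists_adj_ne_ne_of_three_le_degree h3 a (tpath hT b x).penultimate
  have hc : c ∉ (tpath hT b x).support := fun hc =>
    hcpen (hT.isAcyclic.eq_penultimate_of_adj_end (tpath_isPath hT b x) hxc hc)
  have hpath := (tpath_isPath hT b x).concat hc hxc
  have hcS : c ∈ S := by
    simp [S, tpath_eq_of_isPath hT hpath, Walk.support_concat, hax, hca.symm]
  have := hmax c hcS
  rw [tpath_eq_of_isPath hT hpath, Walk.length_concat] at this
  omega

lemma exists_leaf_distToPath_lt (hw : ∀ e ∈ G.edgeSet, 0 < w e)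
    (hdeg : ∀ x : V, G.degree x ≠ 2) {p : G.Walk u v} (hp : p.IsPath) {a m : V}
    (ha : a ∈ p.support) (hau : a ≠ u) (hav : a ≠ v) (hm : m ∈ p.support) (ham : a ≠ m) :
    ∃ x ∈ leaves G, x ≠ u ∧ x ≠ v ∧ distToPath hT w x p < tdist hT w m x := by
  obtain ⟨b, hab, hbp⟩ := exists_adj_notMem_support hT.isAcyclic hdeg hp ha hau hav
  obtain ⟨x, hx, hax⟩ := exists_leaf_notMem_support_tpath hT hdeg hab
  have hcross : ∀ y ∈ p.support, a ∈ (tpath hT y x).support := fun y hy =>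
    mem_support_tpath_of_adj hT hab hax fun hb => hbp (support_tpath_subset hT hp hy ha hb)
  have hne : ∀ y ∈ p.support, y ≠ a → x ≠ y := by
    rintro y hy hya rfl
    have hxa := hcross x hy
    rw [tpath_self, Walk.support_nil, List.mem_singleton] at hxa
    exact hya hxa.symm
  refine ⟨x, hx, hne u p.start_mem_support hau.symm, hne v p.end_mem_support hav.symm, ?_⟩
  calc distToPath hT w x p
      ≤ tdist hT w a x := (distToPath_le hT w x p ha).trans_eq (tdist_comm hT w x a)
    _ < tdist hT w m a + tdist hT w a x := lt_add_of_pos_left _ (tdist_pos hT hw ham.symm)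
    _ = tdist hT w m x := tdist_add_tdist hT w (tpath_isPath hT m x) (hcross m hm)

lemma leafStatus_eq_add_sum [DecidableEq V] {m : V} (hu : u ∈ leaves G) (hv : v ∈ leaves G)
    (huv : u ≠ v) {p : G.Walk u v} (hp : p.IsPath) (hm : m ∈ p.support) :
    leafStatus hT w m = tdist hT w u v + ∑ x ∈ ((leaves G).erase u).erase v, tdist hT w m x := by
  rw [leafStatus, ← add_sum_erase _ _ hu, ← add_sum_erase _ _ (mem_erase.2 ⟨huv.symm, hv⟩),
    ← tdist_add_tdist hT w hp hm, tdist_comm hT w m u, add_assoc]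

lemma pathLeafStatus_eq_sum [DecidableEq V] (hw : ∀ e ∈ G.edgeSet, 0 ≤ w e)
    (hu : u ∈ leaves G) (hv : v ∈ leaves G) (huv : u ≠ v) (p : G.Walk u v) :
    pathLeafStatus hT w p = ∑ x ∈ ((leaves G).erase u).erase v, distToPath hT w x p := by
  rw [pathLeafStatus, ← add_sum_erase _ _ hu, ← add_sum_erase _ _ (mem_erase.2 ⟨huv.symm, hv⟩),
    distToPath_eq_zero hT hw p p.start_mem_support, distToPath_eq_zero hT hw p p.end_mem_support,
    zero_add, zero_add]

end Tree

/-- for distinct leaves `u, v` and an internal vertex `m` of the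
unique `u`-`v`-path `p`, we have `z(u,v) ≤ ℓ(m)`, with equality iff
`p = (u, m, v)`, i.e. `u` and `v` form a cherry with mid-point `m`. -/
theorem stmt8 {V : Type*} [Fintype V] {G : SimpleGraph V} [DecidableRel G.Adj]
    (hT : G.IsTree) (w : Sym2 V → ℝ) (hw : ∀ e ∈ G.edgeSet, 0 < w e)
    (hdeg : ∀ x : V, G.degree x ≠ 2)
    (u v : V) (hu : u ∈ leaves G) (hv : v ∈ leaves G) (huv : u ≠ v)
    (p : G.Walk u v) (hp : p.IsPath)
    (m : V) (hm : m ∈ p.support) (hmu : m ≠ u) (hmv : m ≠ v) :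
    tdist hT w u v + pathLeafStatus hT w p ≤ leafStatus hT w m ∧
    (tdist hT w u v + pathLeafStatus hT w p = leafStatus hT w m ↔
      (G.Adj u m ∧ G.Adj m v)) := by
  classical
  have hw₀ : ∀ e ∈ G.edgeSet, 0 ≤ w e := fun e he => (hw e he).le
  have hle : ∀ x ∈ ((leaves G).erase u).erase v, distToPath hT w x p ≤ tdist hT w m x :=
    fun x _ => (distToPath_le hT w x p hm).trans_eq (tdist_comm hT w x m)
  rw [leafStatus_eq_add_sum hT hu hv huv hp hm, pathLeafStatus_eq_sum hT hw₀ hu hv huv,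
    add_le_add_iff_left, add_right_inj, sum_eq_sum_iff_of_le hle]
  refine ⟨sum_le_sum hle, fun heq => ?_, fun ⟨hadj_um, hadj_mv⟩ x hx => ?_⟩
  · refine adj_and_adj_of_forall_mem_support_eq hp hm hmu hmv fun a ha hau hav => ?_
    by_contra ham
    obtain ⟨x, hx, hxu, hxv, hlt⟩ := exists_leaf_distToPath_lt hT hw hdeg hp ha hau hav hm ham
    exact hlt.ne (heq x (mem_erase.2 ⟨hxv, mem_erase.2 ⟨hxu, hx⟩⟩))
  · obtain ⟨hxv, hx⟩ := mem_erase.1 hx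
    exact distToPath_eq_tdist_of_adj_of_adj hT hw₀ (mem_filter.1 hu).2 (mem_filter.1 hv).2 huv
      hadj_um hadj_mv hp (mem_erase.1 hx).1 hxv
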